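/- For all monotone maps ψ : [n'] → [n] and φ : [n] → [1], letting ψ' := id_{[m]} ⊔ ψ : [m+1+n'] → [m+1+n], one has c(ψ') ∘ f_{φ∘ψ} = f_φ ∘ c(ψ') as graded maps C(m+1+n') → C(m+1+n). -/

import Mathlib

/-!
We represent the (augmented) normalized chain complex `C(N)` of the standard `N`-simplex by the
free abelian group on the finite subsets of `{0,…,N}`, a subset of cardinality `p+1` standing for
the strictly increasing `(p+1)`-tuple of its elements (a `p`-chain); the differential is the
alternating sum of the tuples obtained by deleting one entry (and vanishes on `0`-chains), and
the augmentation sends every `0`-chain basis element to `1` (and vanishes in higher degrees).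
-/

noncomputable section

abbrev Ch (α : Type) := Finset α →₀ ℤ

/-- index of `a` in `s`: the number of smaller elements of `s`. -/
def idx {α : Type} [LinearOrder α] (s : Finset α) (a : α) : ℕ :=
  (s.filter (fun b => b < a)).card

/-- value of the simplicial differential on a basis tuple:
`d(i₀,…,i_p) = Σₖ (−1)^k (i₀,…,î_k,…,i_p)` for `p ≥ 1`, and `0` on `0`-chains. -/
def dAux {α : Type} [LinearOrder α] (s : Finset α) : Ch α :=
  if 2 ≤ s.card then
    ∑ a ∈ s, ((-1 : ℤ) ^ (idx s a)) • Finsupp.single (s.erase a) (1 : ℤ)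
  else 0

/-- the differential of `C(N)`. -/
def chD (α : Type) [LinearOrder α] : Ch α →ₗ[ℤ] Ch α :=
  Finsupp.lift _ ℤ _ dAux

/-- the augmentation of `C(N)`: `e(i₀) = 1` on `0`-chains, `0` in higher degrees. -/
def chE (α : Type) : Ch α →ₗ[ℤ] ℤ :=
  Finsupp.lift _ ℤ _ (fun s => if s.card = 1 then (1 : ℤ) else 0)

/-- The chain map `c(ψ) : C(N') → C(N)` induced by a (monotone) map `ψ`,
`(i₀,…,i_p) ↦ (ψ(i₀),…,ψ(i_p))`, with the convention that a tuple with a repeated entry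
denotes `0`. -/
def chMap {α β : Type} [DecidableEq β] (ψ : α → β) : Ch α →ₗ[ℤ] Ch β :=
  Finsupp.lift _ ℤ _ (fun s =>
    if (s.image ψ).card = s.card then Finsupp.single (s.image ψ) (1 : ℤ) else 0)

/-- the element `m` of `{0,…,m+1+n}`. -/
def elM (m n : ℕ) : Fin (m+1+n+1) := ⟨m, by omega⟩

/-- `f_n` on a basis tuple `(i₀ < … < i_p)`, following the case analysis of the paper
(expressed via the sets of entries `< m` and `> m`):
`f_n = id` if `i_p ≤ m` or `m ≤ i₀`; `f_n(i₀,i₁) = (i₀,m) + (m,i₁)` if `p = 1` and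
`i₀ < m < i₁`; `f_n(i₀,…,i_p) = (m,i₁,…,i_p)` if `p > 1` and `i₀ < m < i₁`;
`f_n(i₀,…,i_p) = (i₀,…,i_{p−1},m)` if `p > 1` and `i_{p−1} < m < i_p`; `f_n = 0` otherwise
(i.e. if `i₁ ≤ m ≤ i_{p−1}`). -/
def fnAux (m n : ℕ) (s : Finset (Fin (m+1+n+1))) : Ch (Fin (m+1+n+1)) :=
  let M := elM m n
  let lo := s.filter (fun i => i < M)
  let hi := s.filter (fun i => M < i)
  if lo.card = 0 ∨ hi.card = 0 then Finsupp.single s 1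
  else if lo.card = 1 ∧ hi.card = 1 ∧ M ∉ s then
    Finsupp.single (insert M lo) 1 + Finsupp.single (insert M hi) 1
  else if lo.card = 1 ∧ 2 ≤ hi.card ∧ M ∉ s then Finsupp.single (insert M hi) 1
  else if 2 ≤ lo.card ∧ hi.card = 1 ∧ M ∉ s then Finsupp.single (insert M lo) 1
  else 0

/-- the graded `ℤ`-linear endomorphism `f_n` of `C(m+1+n)`. -/
def fN (m n : ℕ) : Ch (Fin (m+1+n+1)) →ₗ[ℤ] Ch (Fin (m+1+n+1)) :=
  Finsupp.lift _ ℤ _ (fnAux m n)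

/-- `φ̄ : [m+1+n] → [1]`, extending `φ : [n] → [1]` by `0` on `{0,…,m}`. -/
def phibar (m n : ℕ) (φ : Fin (n+1) → Fin 2) : Fin (m+1+n+1) → Fin 2 := fun i =>
  if (i : ℕ) ≤ m then 0 else φ ⟨(i : ℕ) - (m + 1), by have := i.isLt; omega⟩

/-- concatenation on the right with the fixed tuple `t`, extended `ℤ`-bilinearly, with the
repeated-entry convention (a concatenation which is not strictly increasing is `0`). -/
def concatR {α : Type} [LinearOrder α] (t : Finset α) : Ch α →ₗ[ℤ] Ch α :=
  Finsupp.lift _ ℤ _ (fun u =>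
    if ∀ x ∈ u, ∀ y ∈ t, x < y then Finsupp.single (u ∪ t) (1 : ℤ) else 0)

/-- `f_φ` on a basis tuple `s`: writing `s` as the concatenation of its prefix
`s₀ = (i₀,…,i_{k_φ})` on which `φ̄` vanishes and its suffix `s₁ = (i_{k_φ+1},…,i_p)` on which
`φ̄` equals `1`, set `f_φ(s) = f_n(s₀)·s₁` (in particular `f_φ(s) = s` when `k_φ = −1` and
`f_φ(s) = f_n(s)` when `k_φ = p`). -/
def fPhiAux (m n : ℕ) (φ : Fin (n+1) → Fin 2) (s : Finset (Fin (m+1+n+1))) :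
    Ch (Fin (m+1+n+1)) :=
  concatR (s.filter (fun i => phibar m n φ i = 1))
    (fnAux m n (s.filter (fun i => phibar m n φ i = 0)))

/-- the graded `ℤ`-linear endomorphism `f_φ` of `C(m+1+n)`. -/
def fPhi (m n : ℕ) (φ : Fin (n+1) → Fin 2) :
    Ch (Fin (m+1+n+1)) →ₗ[ℤ] Ch (Fin (m+1+n+1)) :=
  Finsupp.lift _ ℤ _ (fPhiAux m n φ)

/-- the join `φ ⊔ ψ : [m'+1+n'] → [m+1+n]` of two maps, sending `i` to `φ(i)` for `i ≤ m'`
and to `m+1+ψ(i−1−m')` for `i ≥ m'+1`. -/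
def joinFun {m' m n' n : ℕ} (φ : Fin (m'+1) → Fin (m+1)) (ψ : Fin (n'+1) → Fin (n+1)) :
    Fin (m'+1+n'+1) → Fin (m+1+n+1) := fun i =>
  if h : (i : ℕ) ≤ m' then Fin.castLE (by omega) (φ ⟨(i : ℕ), by omega⟩)
  else
    have h2 : (i : ℕ) - (m' + 1) < n' + 1 := by have := i.isLt; omega
    Fin.castLE (by omega) (Fin.natAdd (m+1) (ψ ⟨(i : ℕ) - (m' + 1), h2⟩))

/-! Write `J = id ⊔ ψ`. It is monotone, fixes `{0,…,m}`, sends everything else above `m`, and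
`φ̄ ∘ J` is the extension of `φ ∘ ψ`; so `J` respects both the splitting `s = s₀ · s₁` of a tuple
by the value of `φ̄` and the position of each entry relative to `m`. Hence concatenation with a
fixed tuple and `f_n` commute with `c(J)` on tuples where `J` is injective. When `J` identifies
two entries, they lie above `m` and in the same part, and both sides vanish: if the part is `s₁`,
the two entries survive into every concatenation with `s₁`; if it is `s₀`, then `s₀` has at
least two entries above `m`, and every term of `f_n(s₀)` keeps all of them. -/

lemma injOn_of_forall_injOn_fiber {α β γ : Type} {f : α → β} {g : α → γ} {s : Finset α}
    [∀ c, DecidablePred (g · = c)] (hfg : ∀ a b, f a = f b → g a = g b)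
    (h : ∀ c, Set.InjOn f ↑(s.filter (g · = c))) : Set.InjOn f s :=
  fun a ha b hb hab => h (g a) (by simpa using ha) (by simpa [hfg a b hab] using hb) hab

section ChainMaps

variable {α β : Type} [DecidableEq β]

lemma chMap_single (f : α → β) (s : Finset α) :
    chMap f (Finsupp.single s 1) =
      if (s.image f).card = s.card then Finsupp.single (s.image f) 1 else 0 := by
  simp [chMap]

lemma chMap_single_of_injOn {f : α → β} {s : Finset α} (h : Set.InjOn f s) :
    chMap f (Finsupp.single s 1) = Finsupp.single (s.image f) 1 := by
  rw [chMap_single, if_pos (Finset.card_image_of_injOn h)]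

lemma chMap_single_of_not_injOn {f : α → β} {s : Finset α} (h : ¬ Set.InjOn f s) :
    chMap f (Finsupp.single s 1) = 0 := by
  rw [chMap_single, if_neg (fun hc => h (Finset.card_image_iff.mp hc))]

end ChainMaps

section Concat

variable {α β : Type} [LinearOrder α]

lemma concatR_single (t u : Finset α) :
    concatR t (Finsupp.single u 1) =
      if ∀ x ∈ u, ∀ y ∈ t, x < y then Finsupp.single (u ∪ t) 1 else 0 := by
  simp [concatR]

lemma concatR_single_eq_zero {t u : Finset α} {x y : α} (hx : x ∈ u) (hy : y ∈ t) (hyx : y ≤ x) :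
    concatR t (Finsupp.single u 1) = 0 := by
  rw [concatR_single, if_neg fun h => (h x hx y hy).not_ge hyx]

lemma chMap_comp_concatR [LinearOrder β] {f : α → β} (hf : Monotone f) {t : Finset α}
    (ht : Set.InjOn f t) :
    (chMap f).comp (concatR t) = (concatR (t.image f)).comp (chMap f) := by
  ext u : 2
  simp only [LinearMap.comp_apply, Finsupp.lsingle_apply]
  have rhs_eq_zero (h : ∃ x ∈ u, ∃ y ∈ t, f y ≤ f x) :
      concatR (t.image f) (chMap f (Finsupp.single u 1)) = 0 := by
    obtain ⟨x, hx, y, hy, hyx⟩ := h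
    rw [chMap_single]
    split_ifs
    · exact concatR_single_eq_zero (Finset.mem_image_of_mem f hx) (Finset.mem_image_of_mem f hy)
        hyx
    · exact map_zero _
  rw [concatR_single]
  by_cases hut : ∀ x ∈ u, ∀ y ∈ t, x < y
  · have hdisj : Disjoint (u : Set α) t :=
      Set.disjoint_left.2 fun x hx hx' => (hut x hx x hx').false
    rw [if_pos hut]
    by_cases hinj : Set.InjOn f ↑(u ∪ t)
    · rw [chMap_single_of_injOn hinj, chMap_single_of_injOn (hinj.mono (by simp)), concatR_single,
        if_pos, Finset.image_union]
      simp only [Finset.forall_mem_image]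
      intro x hx y hy
      exact (hf (hut x hx y hy).le).lt_of_ne fun h =>
        (hut x hx y hy).ne (hinj (by simp [hx]) (by simp [hy]) h)
    · rw [chMap_single_of_not_injOn hinj, eq_comm]
      by_cases hu : Set.InjOn f u
      · rw [Finset.coe_union, Set.injOn_union hdisj] at hinj
        obtain ⟨x, hx, y, hy, hxy⟩ : ∃ x ∈ u, ∃ y ∈ t, f x = f y := by simpa [hu, ht] using hinj
        exact rhs_eq_zero ⟨x, hx, y, hy, hxy.ge⟩
      · rw [chMap_single_of_not_injOn hu, map_zero]
  · rw [if_neg hut, map_zero, eq_comm]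
    obtain ⟨x, hx, y, hy, hyx⟩ : ∃ x ∈ u, ∃ y ∈ t, y ≤ x := by simpa using hut
    exact rhs_eq_zero ⟨x, hx, y, hy, hf hyx⟩

lemma chMap_comp_concatR_of_not_injOn [DecidableEq β] {f : α → β} {t : Finset α}
    (ht : ¬ Set.InjOn f t) :
    (chMap f).comp (concatR t) = 0 := by
  ext u : 2
  simp only [LinearMap.comp_apply, Finsupp.lsingle_apply, concatR_single, LinearMap.zero_apply]
  split_ifs
  · exact chMap_single_of_not_injOn fun h => ht (h.mono (by simp))
  · simp

end Concat

section Join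

variable {m' m n' n : ℕ}

lemma joinFun_val (φ : Fin (m'+1) → Fin (m+1)) (ψ : Fin (n'+1) → Fin (n+1))
    (i : Fin (m'+1+n'+1)) :
    (joinFun φ ψ i : ℕ) =
      if h : (i : ℕ) ≤ m' then (φ ⟨i, by omega⟩ : ℕ)
      else m + 1 + ψ ⟨i - (m' + 1), by have := i.isLt; omega⟩ := by
  unfold joinFun
  split_ifs <;> rfl

lemma Monotone.joinFun {φ : Fin (m'+1) → Fin (m+1)} {ψ : Fin (n'+1) → Fin (n+1)}
    (hφ : Monotone φ) (hψ : Monotone ψ) : Monotone (joinFun φ ψ) := by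
  intro a b hab
  rw [Fin.le_def] at hab
  rw [Fin.le_def, joinFun_val, joinFun_val]
  split_ifs with ha hb hb
  · exact hφ (Fin.mk_le_mk.2 hab)
  · have := (φ ⟨a, by omega⟩).isLt; omega
  · omega
  · have := a.isLt
    have := b.isLt
    have := @hψ ⟨a - (m' + 1), by omega⟩ ⟨b - (m' + 1), by omega⟩ (Fin.mk_le_mk.2 (by omega))
    rw [Fin.le_def] at this
    omega

variable {ψ : Fin (n'+1) → Fin (n+1)}

lemma joinFun_id_val (i : Fin (m+1+n'+1)) :
    (joinFun (id : Fin (m+1) → Fin (m+1)) ψ i : ℕ) =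
      if (i : ℕ) ≤ m then (i : ℕ) else m + 1 + ψ ⟨i - (m + 1), by have := i.isLt; omega⟩ := by
  rw [joinFun_val]
  split_ifs <;> rfl

lemma joinFun_id_lt_elM_iff {i : Fin (m+1+n'+1)} :
    joinFun (id : Fin (m+1) → Fin (m+1)) ψ i < elM m n ↔ i < elM m n' := by
  rw [Fin.lt_def, Fin.lt_def, joinFun_id_val]
  simp only [elM]
  split_ifs <;> omega

lemma elM_lt_joinFun_id_iff {i : Fin (m+1+n'+1)} :
    elM m n < joinFun (id : Fin (m+1) → Fin (m+1)) ψ i ↔ elM m n' < i := by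
  rw [Fin.lt_def, Fin.lt_def, joinFun_id_val]
  simp only [elM]
  split_ifs <;> omega

lemma elM_lt_of_joinFun_id_eq {a b : Fin (m+1+n'+1)} (hne : a ≠ b)
    (h : joinFun (id : Fin (m+1) → Fin (m+1)) ψ a = joinFun id ψ b) : elM m n' < a := by
  have h := congrArg Fin.val h
  rw [joinFun_id_val, joinFun_id_val] at h
  rw [Fin.lt_def]
  simp only [elM]
  split_ifs at h with ha hb hb
  · exact absurd (Fin.ext h) hne
  all_goals omega

lemma phibar_joinFun_id (φ : Fin (n+1) → Fin 2) (i : Fin (m+1+n'+1)) :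
    phibar m n φ (joinFun (id : Fin (m+1) → Fin (m+1)) ψ i) = phibar m n' (φ ∘ ψ) i := by
  have hi := joinFun_id_val (ψ := ψ) i
  unfold phibar
  split_ifs at hi ⊢ with h₁ h₂ h₂
  · rfl
  · omega
  · omega
  · simp only [Function.comp_apply]
    congr 1
    ext
    simp only [hi]
    omega

end Join

section Fn

variable {m n' n : ℕ}

lemma fN_single (s : Finset (Fin (m+1+n+1))) : fN m n (Finsupp.single s 1) = fnAux m n s := by
  simp [fN]

lemma chMap_fnAux_of_injOn {g : Fin (m+1+n'+1) → Fin (m+1+n+1)}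
    (hlt : ∀ i, g i < elM m n ↔ i < elM m n') (hgt : ∀ i, elM m n < g i ↔ elM m n' < i)
    {s : Finset (Fin (m+1+n'+1))} (hinj : Set.InjOn g s) :
    chMap g (fnAux m n' s) = fnAux m n (s.image g) := by
  have hM (i) : g i = elM m n ↔ i = elM m n' := by
    rw [le_antisymm_iff, le_antisymm_iff, ← not_lt, ← not_lt, hlt, hgt, not_lt, not_lt]
  have hinj' : Set.InjOn g ↑(insert (elM m n') s) := by
    rw [Finset.coe_insert]
    rintro a (rfl | ha) b (rfl | hb) hab
    · rfl
    · exact ((hM b).1 (hab ▸ (hM _).2 rfl)).symm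
    · exact (hM a).1 (hab ▸ (hM _).2 rfl)
    · exact hinj ha hb hab
  have hsingle : chMap g (Finsupp.single s 1) = Finsupp.single (s.image g) 1 :=
    chMap_single_of_injOn hinj
  have hsingle_insert (p) [DecidablePred p] :
      chMap g (Finsupp.single (insert (elM m n') (s.filter p)) 1)
        = Finsupp.single (insert (elM m n) ((s.filter p).image g)) 1 := by
    rw [chMap_single_of_injOn (hinj'.mono (Finset.coe_subset.2
      (Finset.insert_subset_insert _ (Finset.filter_subset p s)))), Finset.image_insert,
      (hM _).2 rfl]
  have hlo : (s.image g).filter (· < elM m n) = (s.filter (· < elM m n')).image g := by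
    rw [Finset.filter_image]
    simp only [hlt]
  have hhi : (s.image g).filter (elM m n < ·) = (s.filter (elM m n' < ·)).image g := by
    rw [Finset.filter_image]
    simp only [hgt]
  have hmem : elM m n ∈ s.image g ↔ elM m n' ∈ s := by simp [hM]
  have hcard (p) [DecidablePred p] : ((s.filter p).image g).card = (s.filter p).card :=
    Finset.card_image_of_injOn (hinj.mono (Finset.coe_subset.2 (Finset.filter_subset p s)))
  unfold fnAux
  dsimp only
  rw [hlo, hhi]
  simp only [hcard, hmem]
  split_ifs <;> simp only [map_add, map_zero, hsingle, hsingle_insert]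

lemma chMap_fnAux_eq_zero {β : Type} [DecidableEq β] (g : Fin (m+1+n+1) → β)
    {s : Finset (Fin (m+1+n+1))} {a b : Fin (m+1+n+1)} (ha : a ∈ s) (hb : b ∈ s) (hne : a ≠ b)
    (haM : elM m n < a) (hbM : elM m n < b) (hab : g a = g b) :
    chMap g (fnAux m n s) = 0 := by
  have hhi : 1 < (s.filter (elM m n < ·)).card :=
    Finset.one_lt_card.2 ⟨a, by simp [ha, haM], b, by simp [hb, hbM], hne⟩
  have hzero {u : Finset _} (hau : a ∈ u) (hbu : b ∈ u) : chMap g (Finsupp.single u 1) = 0 :=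
    chMap_single_of_not_injOn fun h => hne (h hau hbu hab)
  unfold fnAux
  dsimp only
  split_ifs
  · exact hzero ha hb
  · omega
  · exact hzero (by simp [ha, haM]) (by simp [hb, hbM])
  · omega
  · exact map_zero _

end Fn

lemma chMap_comp_fN {m n' n : ℕ} (ψ : Fin (n'+1) → Fin (n+1)) :
    (chMap (joinFun (id : Fin (m+1) → Fin (m+1)) ψ)).comp (fN m n') =
      (fN m n).comp (chMap (joinFun (id : Fin (m+1) → Fin (m+1)) ψ)) := by
  ext s : 2
  simp only [LinearMap.comp_apply, Finsupp.lsingle_apply, fN_single]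
  by_cases hinj : Set.InjOn (joinFun (id : Fin (m+1) → Fin (m+1)) ψ) s
  · rw [chMap_single_of_injOn hinj, fN_single]
    exact chMap_fnAux_of_injOn (fun _ => joinFun_id_lt_elM_iff) (fun _ => elM_lt_joinFun_id_iff)
      hinj
  · obtain ⟨a, ha, b, hb, hab, hne⟩ : ∃ a ∈ s, ∃ b ∈ s, _ ∧ a ≠ b := by
      simpa [Set.InjOn] using hinj
    rw [chMap_single_of_not_injOn hinj, map_zero]
    exact chMap_fnAux_eq_zero _ ha hb hne (elM_lt_of_joinFun_id_eq hne hab)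
      (elM_lt_of_joinFun_id_eq hne.symm hab.symm) hab

lemma image_joinFun_id_filter_phibar {m n' n : ℕ} (ψ : Fin (n'+1) → Fin (n+1))
    (φ : Fin (n+1) → Fin 2) (s : Finset (Fin (m+1+n'+1))) (c : Fin 2) :
    (s.image (joinFun (id : Fin (m+1) → Fin (m+1)) ψ)).filter (phibar m n φ · = c) =
      (s.filter (phibar m n' (φ ∘ ψ) · = c)).image (joinFun id ψ) := by
  rw [Finset.filter_image]
  simp only [phibar_joinFun_id]

lemma fPhi_single (m n : ℕ) (φ : Fin (n+1) → Fin 2) (s : Finset (Fin (m+1+n+1))) :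
    fPhi m n φ (Finsupp.single s 1) =
      concatR (s.filter (phibar m n φ · = 1))
        (fN m n (Finsupp.single (s.filter (phibar m n φ · = 0)) 1)) := by
  simp [fPhi, fPhiAux, fN_single]

/-- STATEMENT 14: for all monotone maps `ψ : [n'] → [n]` and `φ : [n] → [1]`, with
`ψ' := id_{[m]} ⊔ ψ`, one has `c(ψ') ∘ f_{φ∘ψ} = f_φ ∘ c(ψ')`. -/
theorem fPhi_natural {n' : ℕ} (m n : ℕ) (ψ : Fin (n'+1) →o Fin (n+1)) (φ : Fin (n+1) →o Fin 2) :
    (chMap (joinFun (id : Fin (m+1) → Fin (m+1)) ⇑ψ)).comp (fPhi m n' ⇑(φ.comp ψ)) =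
      (fPhi m n ⇑φ).comp (chMap (joinFun (id : Fin (m+1) → Fin (m+1)) ⇑ψ)) := by
  set J := joinFun (id : Fin (m+1) → Fin (m+1)) ⇑ψ
  ext s : 2
  simp only [LinearMap.comp_apply, Finsupp.lsingle_apply, fPhi_single, OrderHom.comp_coe]
  set s₀ := s.filter (phibar m n' (φ ∘ ψ) · = 0)
  set s₁ := s.filter (phibar m n' (φ ∘ ψ) · = 1)
  have hs₀ : (s₀ : Set (Fin (m+1+n'+1))) ⊆ s := Finset.coe_subset.2 (Finset.filter_subset _ s)
  have hs₁ : (s₁ : Set (Fin (m+1+n'+1))) ⊆ s := Finset.coe_subset.2 (Finset.filter_subset _ s)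
  by_cases h₁ : Set.InjOn J s₁
  · rw [← LinearMap.comp_apply (chMap J) (concatR s₁),
      chMap_comp_concatR (monotone_id.joinFun ψ.monotone) h₁,
      LinearMap.comp_apply, ← LinearMap.comp_apply (chMap J), chMap_comp_fN, LinearMap.comp_apply]
    by_cases h : Set.InjOn J s
    · rw [chMap_single_of_injOn (h.mono hs₀), chMap_single_of_injOn h, fPhi_single,
        image_joinFun_id_filter_phibar, image_joinFun_id_filter_phibar]
    · have hfib (a b) (hab : J a = J b) : phibar m n' (φ ∘ ψ) a = phibar m n' (φ ∘ ψ) b := by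
        simpa only [J, phibar_joinFun_id] using congrArg (phibar m n φ) hab
      have h₀ : ¬ Set.InjOn J s₀ := fun h₀ =>
        h (injOn_of_forall_injOn_fiber hfib (Fin.forall_fin_two.2 ⟨h₀, h₁⟩))
      rw [chMap_single_of_not_injOn h₀, chMap_single_of_not_injOn h]
      simp only [map_zero]
  · rw [← LinearMap.comp_apply (chMap J) (concatR s₁), chMap_comp_concatR_of_not_injOn h₁,
      LinearMap.zero_apply, chMap_single_of_not_injOn fun h => h₁ (h.mono hs₁), map_zero]
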